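/- Let A_T = I + ∑_{t=1}^T x_t x_t^⊤/r with r > 0 and ‖x_t‖₂ ≤ X. Then ∑_{t=1}^T x_t^⊤ A_t^{-1} x_t ≤ r·d·log(1 + T X²/r), where A_t = I + ∑_{s=1}^t x_s x_s^⊤/r. -/

import Mathlib

/-!
Since `A_{t-1} = A_t - r⁻¹ x_t x_tᵀ`, the matrix determinant lemma gives
`det A_{t-1} = det A_t * (1 - r⁻¹ x_tᵀ A_t⁻¹ x_t)`, and `1 - y ≤ -log y` turns this into
`r⁻¹ x_tᵀ A_t⁻¹ x_t ≤ log det A_t - log det A_{t-1}`. Summing telescopes to `log det A_T`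
because `A_0 = 1`. By Cauchy–Schwarz `vᵀ A_T v ≤ (1 + T X² / r) ‖v‖²`, which bounds every
eigenvalue of `A_T` and hence `det A_T ≤ (1 + T X² / r) ^ d`.
-/

open Matrix Finset

namespace Matrix

variable {n : Type*} [Fintype n]

theorem dotProduct_mulVec_vecMulVec_self_le (x v : n → ℝ) :
    v ⬝ᵥ vecMulVec x x *ᵥ v ≤ (x ⬝ᵥ x) * (v ⬝ᵥ v) := by
  have hsq : v ⬝ᵥ vecMulVec x x *ᵥ v = (x ⬝ᵥ v) ^ 2 := by
    rw [vecMulVec_mulVec]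
    simp [sq, dotProduct_comm]
  rw [hsq]
  simpa only [dotProduct, sq] using sum_mul_sq_le_sq_mul_sq univ x v

variable [DecidableEq n]

theorem det_add_vecMulVec {R : Type*} [CommRing R] {M : Matrix n n R} (hM : IsUnit M.det)
    (u v : n → R) : (M + vecMulVec u v).det = M.det * (1 + v ⬝ᵥ M⁻¹ *ᵥ u) := by
  rw [vecMulVec_eq Unit, det_add_replicateCol_mul_replicateRow hM]
  congr 1
  rw [det_unique]
  simp [mul_apply, mulVec, dotProduct, mul_sum, sum_mul, mul_assoc]
  exact sum_comm

theorem smul_dotProduct_inv_mulVec_le_log_det_sub {M : Matrix n n ℝ} {c : ℝ} {x : n → ℝ}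
    (hM : 0 < M.det) (hN : 0 < (M - c • vecMulVec x x).det) :
    c * (x ⬝ᵥ M⁻¹ *ᵥ x) ≤ Real.log M.det - Real.log (M - c • vecMulVec x x).det := by
  have hdet : (M - c • vecMulVec x x).det = M.det * (1 - c * (x ⬝ᵥ M⁻¹ *ᵥ x)) := by
    rw [sub_eq_add_neg, ← neg_smul, ← smul_vecMulVec, det_add_vecMulVec hM.ne'.isUnit,
      mulVec_smul, dotProduct_smul, smul_eq_mul, neg_mul, ← sub_eq_add_neg]
  have hratio : 0 < 1 - c * (x ⬝ᵥ M⁻¹ *ᵥ x) := pos_of_mul_pos_right (hdet ▸ hN) hM.le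
  rw [hdet, Real.log_mul hM.ne' hratio.ne']
  linarith [Real.log_le_sub_one_of_pos hratio]

theorem sum_smul_dotProduct_inv_mulVec_le_log_det {A : ℕ → Matrix n n ℝ} {x : ℕ → n → ℝ}
    {c : ℝ} (hA : ∀ t, A (t + 1) = A t + c • vecMulVec (x (t + 1)) (x (t + 1)))
    (hdet : ∀ t, 0 < (A t).det) (T : ℕ) :
    ∑ t ∈ Icc 1 T, c * (x t ⬝ᵥ (A t)⁻¹ *ᵥ x t) ≤ Real.log (A T).det - Real.log (A 0).det := by
  induction T with
  | zero => simp
  | succ T ih =>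
    have hprev : A (T + 1) - c • vecMulVec (x (T + 1)) (x (T + 1)) = A T := by
      rw [hA T, add_sub_cancel_right]
    have hstep := smul_dotProduct_inv_mulVec_le_log_det_sub (hdet (T + 1)) (hprev ▸ hdet T)
    rw [hprev] at hstep
    rw [sum_Icc_succ_top (by omega)]
    linarith

theorem dotProduct_mulVec_one_add_sum_smul_vecMulVec_le {ι : Type*} (s : Finset ι)
    (x : ι → n → ℝ) {c : ℝ} (hc : 0 ≤ c) (v : n → ℝ) :
    v ⬝ᵥ (1 + ∑ i ∈ s, c • vecMulVec (x i) (x i)) *ᵥ v ≤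
      (1 + c * ∑ i ∈ s, x i ⬝ᵥ x i) * (v ⬝ᵥ v) := by
  rw [add_mulVec, one_mulVec, sum_mulVec, dotProduct_add, dotProduct_sum, add_mul, one_mul,
    mul_sum, sum_mul]
  gcongr with i
  rw [smul_mulVec, dotProduct_smul, smul_eq_mul, mul_assoc]
  exact mul_le_mul_of_nonneg_left (dotProduct_mulVec_vecMulVec_self_le _ _) hc

theorem posDef_one_add_sum_smul_vecMulVec {ι : Type*} (s : Finset ι) (x : ι → n → ℝ) {c : ℝ}
    (hc : 0 ≤ c) : (1 + ∑ i ∈ s, c • vecMulVec (x i) (x i)).PosDef :=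
  PosDef.one.add_posSemidef <| posSemidef_sum _ fun i _ =>
    (posSemidef_vecMulVec_self_star (x i)).smul hc

theorem PosSemidef.det_le_pow {M : Matrix n n ℝ} (hM : M.PosSemidef) {b : ℝ}
    (h : ∀ v, v ⬝ᵥ M *ᵥ v ≤ b * (v ⬝ᵥ v)) : M.det ≤ b ^ Fintype.card n := by
  have heig : ∀ i, hM.1.eigenvalues i ≤ b := fun i => by
    have hunit := real_inner_self_eq_norm_sq (hM.1.eigenvectorBasis i)
    rw [EuclideanSpace.inner_eq_star_dotProduct, star_trivial,
      hM.1.eigenvectorBasis.orthonormal.1 i, one_pow] at hunit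
    simpa [hM.1.eigenvalues_eq, dotProduct_comm, hunit] using h (hM.1.eigenvectorBasis i)
  calc M.det = ∏ i, hM.1.eigenvalues i := by simpa using hM.1.det_eq_prod_eigenvalues
    _ ≤ ∏ _i : n, b := prod_le_prod (fun i _ => hM.eigenvalues_nonneg i) (fun i _ => heig i)
    _ = b ^ Fintype.card n := by simp

end Matrix

/-- `∑_{t=1}^T x_tᵀ A_t⁻¹ x_t ≤ r d log(1 + T X² / r)` where
`A_t = I + ∑_{s=1}^t x_s x_sᵀ / r` and `‖x_t‖₂ ≤ X`. -/
theorem sum_quad_form_inv_le_dim_log {d : ℕ} (r X : ℝ) (hr : 0 < r)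
    (T : ℕ) (x : ℕ → Fin d → ℝ)
    (hx : ∀ t ∈ Finset.Icc 1 T, Real.sqrt (∑ i, (x t i) ^ 2) ≤ X)
    (A : ℕ → Matrix (Fin d) (Fin d) ℝ)
    (hA : ∀ t, A t = 1 + ∑ s ∈ Finset.Icc 1 t, r⁻¹ • Matrix.vecMulVec (x s) (x s)) :
    ∑ t ∈ Finset.Icc 1 T, x t ⬝ᵥ (A t)⁻¹.mulVec (x t) ≤
      r * (d : ℝ) * Real.log (1 + (T : ℝ) * X ^ 2 / r) := by
  have hA_succ (t : ℕ) : A (t + 1) = A t + r⁻¹ • vecMulVec (x (t + 1)) (x (t + 1)) := by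
    rw [hA, hA, sum_Icc_succ_top (by omega), add_assoc]
  have hA_posDef (t : ℕ) : (A t).PosDef :=
    hA t ▸ posDef_one_add_sum_smul_vecMulVec _ x (inv_nonneg.2 hr.le)
  have hnorm : ∑ t ∈ Icc 1 T, x t ⬝ᵥ x t ≤ T * X ^ 2 := by
    calc ∑ t ∈ Icc 1 T, x t ⬝ᵥ x t ≤ #(Icc 1 T) • X ^ 2 :=
          sum_le_card_nsmul _ _ _ fun t ht => by
            simpa [dotProduct, sq] using (Real.sqrt_le_iff.1 (hx t ht)).2
      _ = T * X ^ 2 := by simp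
  have hdet : (A T).det ≤ (1 + T * X ^ 2 / r) ^ d := by
    simpa using (hA_posDef T).posSemidef.det_le_pow fun v => by
      rw [hA]
      refine (dotProduct_mulVec_one_add_sum_smul_vecMulVec_le _ x (inv_nonneg.2 hr.le) v).trans ?_
      rw [div_eq_inv_mul _ r]
      gcongr
      simpa using dotProduct_star_self_nonneg v
  have hpot := sum_smul_dotProduct_inv_mulVec_le_log_det hA_succ (fun t => (hA_posDef t).det_pos) T
  have hA_zero : A 0 = 1 := by simp [hA]
  rw [hA_zero, det_one, Real.log_one, sub_zero, ← mul_sum] at hpot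
  calc ∑ t ∈ Icc 1 T, x t ⬝ᵥ (A t)⁻¹ *ᵥ x t
      = r * (r⁻¹ * ∑ t ∈ Icc 1 T, x t ⬝ᵥ (A t)⁻¹ *ᵥ x t) := by field_simp
    _ ≤ r * Real.log (A T).det := by gcongr
    _ ≤ r * Real.log ((1 + T * X ^ 2 / r) ^ d) := by
        gcongr
        exact (hA_posDef T).det_pos
    _ = r * d * Real.log (1 + T * X ^ 2 / r) := by rw [Real.log_pow]; ring
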